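/- arXiv:2406.01435 — 5 statements merged into one kernel-verified Lean document; each statement's English description precedes it below -/
import Mathlib

section
/- Let F and N be positive integers, let Φ and Ψ be real F×N matrices, let Y ∈ ℝ^N, and let λ > 0. Suppose the N×N matrix ΦᵀΨ + λI_N is invertible (equivalently, its transpose ΨᵀΦ + λI_N is invertible). Then the pair w* = Ψ(ΦᵀΨ + λI_N)⁻¹Y, v* = Φ(ΨᵀΦ + λI_N)⁻¹Y is a stationary point of the asymmetric kernel ridge regression objective, i.e. it satisfies the two stationarity equations λ v* + Φ(Ψᵀ v* − Y) = 0 and λ w* + Ψ(Φᵀ w* − Y) = 0. -/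
/-!
Write `B = Pᵀ M + λ I`. If `B x = Y`, then `λ x + (Pᵀ (M x) − Y) = B x − Y = 0`, and applying `M`
gives `λ (M x) + M (Pᵀ (M x) − Y) = 0`. Both stationarity equations are instances of this, with
`(M, P) = (Φ, Ψ)` and `(Ψ, Φ)`; the two matrices `ΨᵀΦ + λI` and `ΦᵀΨ + λI` are transposes of
each other, so one is invertible when the other is.
-/

open Matrix

variable {m n R : Type*} [Fintype m] [DecidableEq n] [CommRing R]

namespace Matrix

theorem mulVec_nonsing_inv_mulVec [Fintype n] {A : Matrix n n R} (hA : IsUnit A) (v : n → R) :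
    A *ᵥ (A⁻¹ *ᵥ v) = v := by
  rw [mulVec_mulVec, mul_nonsing_inv A ((isUnit_iff_isUnit_det A).mp hA), one_mulVec]

theorem transpose_mul_add_smul_one (M P : Matrix m n R) (lam : R) :
    (Pᵀ * M + lam • (1 : Matrix n n R))ᵀ = Mᵀ * P + lam • 1 := by
  simp

theorem smul_mulVec_add_mulVec_sub_eq_zero [Fintype n] {M P : Matrix m n R} {lam : R}
    {x Y : n → R} (hx : (Pᵀ * M + lam • (1 : Matrix n n R)) *ᵥ x = Y) :
    lam • (M *ᵥ x) + M *ᵥ (Pᵀ *ᵥ (M *ᵥ x) - Y) = 0 := by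
  have hnormal : lam • x + (Pᵀ *ᵥ (M *ᵥ x) - Y) = 0 := by
    rw [← hx, add_mulVec, smul_mulVec, one_mulVec, mulVec_mulVec]
    abel
  rw [← mulVec_smul, ← mulVec_add, hnormal, mulVec_zero]

end Matrix

theorem asymmetric_KRR_stationary_point_general
    (F N : ℕ)
    (Φ Ψ : Matrix (Fin F) (Fin N) ℝ) (Y : Fin N → ℝ) (lam : ℝ)
    (hinv : IsUnit (Φᵀ * Ψ + lam • (1 : Matrix (Fin N) (Fin N) ℝ))) :
    lam • (Φ *ᵥ ((Ψᵀ * Φ + lam • (1 : Matrix (Fin N) (Fin N) ℝ))⁻¹ *ᵥ Y)) +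
        Φ *ᵥ (Ψᵀ *ᵥ (Φ *ᵥ ((Ψᵀ * Φ + lam • (1 : Matrix (Fin N) (Fin N) ℝ))⁻¹ *ᵥ Y)) - Y)
      = 0 ∧
    lam • (Ψ *ᵥ ((Φᵀ * Ψ + lam • (1 : Matrix (Fin N) (Fin N) ℝ))⁻¹ *ᵥ Y)) +
        Ψ *ᵥ (Φᵀ *ᵥ (Ψ *ᵥ ((Φᵀ * Ψ + lam • (1 : Matrix (Fin N) (Fin N) ℝ))⁻¹ *ᵥ Y)) - Y)
      = 0 := by
  have hinv' : IsUnit (Ψᵀ * Φ + lam • (1 : Matrix (Fin N) (Fin N) ℝ)) := by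
    rwa [← isUnit_transpose, transpose_mul_add_smul_one]
  exact ⟨smul_mulVec_add_mulVec_sub_eq_zero (mulVec_nonsing_inv_mulVec hinv' Y),
    smul_mulVec_add_mulVec_sub_eq_zero (mulVec_nonsing_inv_mulVec hinv Y)⟩

/-- For real `F × N` matrices `Φ`, `Ψ`, a vector `Y ∈ ℝ^N` and `λ > 0`,
if `ΦᵀΨ + λ I_N` is invertible, then the pair
`w* = Ψ (ΦᵀΨ + λI)⁻¹ Y`, `v* = Φ (ΨᵀΦ + λI)⁻¹ Y` satisfies the stationarity equations
`λ v* + Φ (Ψᵀ v* − Y) = 0` and `λ w* + Ψ (Φᵀ w* − Y) = 0` of the asymmetric kernel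
ridge regression objective. -/
theorem asymmetric_KRR_stationary_point
    (F N : ℕ) (hF : 0 < F) (hN : 0 < N)
    (Φ Ψ : Matrix (Fin F) (Fin N) ℝ) (Y : Fin N → ℝ) (lam : ℝ) (hlam : 0 < lam)
    (hinv : IsUnit (Φᵀ * Ψ + lam • (1 : Matrix (Fin N) (Fin N) ℝ))) :
    lam • (Φ *ᵥ ((Ψᵀ * Φ + lam • (1 : Matrix (Fin N) (Fin N) ℝ))⁻¹ *ᵥ Y)) +
        Φ *ᵥ (Ψᵀ *ᵥ (Φ *ᵥ ((Ψᵀ * Φ + lam • (1 : Matrix (Fin N) (Fin N) ℝ))⁻¹ *ᵥ Y)) - Y)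
      = 0 ∧
    lam • (Ψ *ᵥ ((Φᵀ * Ψ + lam • (1 : Matrix (Fin N) (Fin N) ℝ))⁻¹ *ᵥ Y)) +
        Ψ *ᵥ (Φᵀ *ᵥ (Ψ *ᵥ ((Φᵀ * Ψ + lam • (1 : Matrix (Fin N) (Fin N) ℝ))⁻¹ *ᵥ Y)) - Y)
      = 0 :=
  asymmetric_KRR_stationary_point_general F N Φ Ψ Y lam hinv
end

section
/- Let F and N be positive integers, let Φ and Ψ be real F×N matrices, let Y ∈ ℝ^N, and let λ > 0. Suppose λI_N + ΦᵀΨ is invertible (equivalently, λI_N + ΨᵀΦ is invertible). Define α* = λ(λI_N + ΦᵀΨ)⁻¹Y, β* = λ(λI_N + ΨᵀΦ)⁻¹Y, w* = (1/λ)Ψα*, v* = (1/λ)Φβ*, e* = α*, and r* = β*. Then (w*, v*, e*, r*, α*, β*) satisfies the KKT (stationarity and feasibility) system of the constrained asymmetric kernel ridge regression problem, namely: λw* = Ψα*, λv* = Φβ*, e* = α*, r* = β*, e* = Y − Φᵀw*, and r* = Y − Ψᵀv*. -/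
/-!
The only nontrivial KKT equations are the two residual equations. Writing `A = λ I + ΦᵀΨ`,
the choice `α = λ A⁻¹ Y` means exactly `(λ I + ΦᵀΨ) α = λ Y`, i.e. `α = Y − λ⁻¹ ΦᵀΨ α`, and
`λ⁻¹ ΦᵀΨ α = Φᵀ w`. The same argument applies to `β` with `(λ I + ΦᵀΨ)ᵀ = λ I + ΨᵀΦ`, which is
invertible together with `λ I + ΦᵀΨ`.
-/

open Matrix

namespace Matrix

variable {m n K : Type*} [Fintype m] [Fintype n] [DecidableEq n] [Field K]

theorem mulVec_smul_nonsing_inv_mulVec {A : Matrix n n K} (hA : IsUnit A) (c : K) (Y : n → K) :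
    A *ᵥ (c • (A⁻¹ *ᵥ Y)) = c • Y := by
  rw [mulVec_smul, mulVec_mulVec, mul_nonsing_inv _ ((isUnit_iff_isUnit_det A).mp hA),
    one_mulVec]

theorem eq_sub_inv_smul_mulVec_of_smul_one_add_mulVec_eq {c : K} (hc : c ≠ 0)
    {M : Matrix n n K} {α Y : n → K} (h : (c • 1 + M) *ᵥ α = c • Y) :
    α = Y - c⁻¹ • (M *ᵥ α) := by
  rw [add_mulVec, smul_mulVec, one_mulVec] at h
  rw [eq_sub_iff_add_eq, ← smul_right_injective _ hc |>.eq_iff, smul_add, smul_inv_smul₀ hc, h]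

theorem isUnit_smul_one_add_transpose_mul_comm {c : K} {Φ Ψ : Matrix m n K}
    (h : IsUnit (c • 1 + Φᵀ * Ψ)) : IsUnit (c • 1 + Ψᵀ * Φ) := by
  have hT : (c • 1 + Φᵀ * Ψ)ᵀ = c • 1 + Ψᵀ * Φ := by
    rw [transpose_add, transpose_smul, transpose_one, transpose_mul, transpose_transpose]
  rwa [← hT, isUnit_transpose]

end Matrix

theorem asymmetric_KRR_KKT_point_general
    (F N : ℕ)
    (Φ Ψ : Matrix (Fin F) (Fin N) ℝ) (Y : Fin N → ℝ) (lam : ℝ) (hlam : 0 < lam)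
    (hinv : IsUnit (lam • (1 : Matrix (Fin N) (Fin N) ℝ) + Φᵀ * Ψ))
    (α β : Fin N → ℝ) (w v : Fin F → ℝ) (e r : Fin N → ℝ)
    (hα : α = lam • ((lam • (1 : Matrix (Fin N) (Fin N) ℝ) + Φᵀ * Ψ)⁻¹ *ᵥ Y))
    (hβ : β = lam • ((lam • (1 : Matrix (Fin N) (Fin N) ℝ) + Ψᵀ * Φ)⁻¹ *ᵥ Y))
    (hw : w = (1 / lam) • (Ψ *ᵥ α))
    (hv : v = (1 / lam) • (Φ *ᵥ β))
    (he : e = α) (hr : r = β) :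
    lam • w = Ψ *ᵥ α ∧
    lam • v = Φ *ᵥ β ∧
    e = α ∧
    r = β ∧
    e = Y - Φᵀ *ᵥ w ∧
    r = Y - Ψᵀ *ᵥ v := by
  have hlam0 : lam ≠ 0 := hlam.ne'
  have hα_solves : (lam • 1 + Φᵀ * Ψ) *ᵥ α = lam • Y := by
    rw [hα]; exact mulVec_smul_nonsing_inv_mulVec hinv lam Y
  have hβ_solves : (lam • 1 + Ψᵀ * Φ) *ᵥ β = lam • Y := by
    rw [hβ]
    exact mulVec_smul_nonsing_inv_mulVec (isUnit_smul_one_add_transpose_mul_comm hinv) lam Y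
  refine ⟨?_, ?_, he, hr, ?_, ?_⟩
  · rw [hw, smul_smul, mul_one_div_cancel hlam0, one_smul]
  · rw [hv, smul_smul, mul_one_div_cancel hlam0, one_smul]
  · rw [he, hw, mulVec_smul, mulVec_mulVec, one_div]
    exact eq_sub_inv_smul_mulVec_of_smul_one_add_mulVec_eq hlam0 hα_solves
  · rw [hr, hv, mulVec_smul, mulVec_mulVec, one_div]
    exact eq_sub_inv_smul_mulVec_of_smul_one_add_mulVec_eq hlam0 hβ_solves

/-- For real `F × N` matrices `Φ`, `Ψ`, `Y ∈ ℝ^N` and `λ > 0` with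
`λ I_N + ΦᵀΨ` invertible, the tuple
`α* = λ (λI + ΦᵀΨ)⁻¹ Y`, `β* = λ (λI + ΨᵀΦ)⁻¹ Y`, `w* = (1/λ) Ψ α*`,
`v* = (1/λ) Φ β*`, `e* = α*`, `r* = β*` satisfies the KKT system of the constrained
asymmetric kernel ridge regression problem: `λ w* = Ψ α*`, `λ v* = Φ β*`, `e* = α*`,
`r* = β*`, `e* = Y − Φᵀ w*`, `r* = Y − Ψᵀ v*`. -/
theorem asymmetric_KRR_KKT_point
    (F N : ℕ) (hF : 0 < F) (hN : 0 < N)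
    (Φ Ψ : Matrix (Fin F) (Fin N) ℝ) (Y : Fin N → ℝ) (lam : ℝ) (hlam : 0 < lam)
    (hinv : IsUnit (lam • (1 : Matrix (Fin N) (Fin N) ℝ) + Φᵀ * Ψ))
    (α β : Fin N → ℝ) (w v : Fin F → ℝ) (e r : Fin N → ℝ)
    (hα : α = lam • ((lam • (1 : Matrix (Fin N) (Fin N) ℝ) + Φᵀ * Ψ)⁻¹ *ᵥ Y))
    (hβ : β = lam • ((lam • (1 : Matrix (Fin N) (Fin N) ℝ) + Ψᵀ * Φ)⁻¹ *ᵥ Y))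
    (hw : w = (1 / lam) • (Ψ *ᵥ α))
    (hv : v = (1 / lam) • (Φ *ᵥ β))
    (he : e = α) (hr : r = β) :
    lam • w = Ψ *ᵥ α ∧
    lam • v = Φ *ᵥ β ∧
    e = α ∧
    r = β ∧
    e = Y - Φᵀ *ᵥ w ∧
    r = Y - Ψᵀ *ᵥ v :=
  asymmetric_KRR_KKT_point_general F N Φ Ψ Y lam hlam hinv α β w v e r hα hβ hw hv he hr
end

section
/- Let d, N be positive integers, x_1,…,x_N ∈ ℝ^d, σ* > 0, and let K be the N×N matrix with entries K_{ij} = exp(−σ*‖x_i − x_j‖²). Let y ∈ ℝ^N, q ∈ (0,1), γ > 0, and let κ > 0 be a constant with |K_{ij}| ≤ κ for all i, j (for the Gaussian kernel matrix this holds for any κ ≥ 1). If α* ∈ ℝ^N is a global minimizer of the ℓ_q-regularized kernel regression objective Φ_q(α) = (1/N) Σ_{i=1}^N ((Kα)_i − y_i)² + γ Σ_{j=1}^N |α_j|^q, then every nonzero coordinate of α* satisfies |α*_i| ≥ ((1−q)/κ²)^{1/(2−q)} γ^{1/(2−q)}. -/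
/-!
Moving only the `i`-th coordinate `s = α* i` of the minimizer along the ray `t ↦ t s`, `t ≥ 0`,
changes the objective by `B (t - 1) + C (t - 1)² + E (t^q - 1)` with `C = ‖K e_i‖² s² / N ≤ κ² s²`
and `E = γ |s|^q`. Minimality at `t = 1` gives the first-order condition `B + q E = 0`, and
comparison with `t = 0` gives `C - B ≥ E`; together `(1 - q) γ |s|^q ≤ κ² s²`, which is the bound.
-/

open Matrix Finset

theorem one_sub_mul_le_of_isMinOn {B C E q : ℝ} (hq : 0 < q)
    (hmin : IsMinOn (fun t : ℝ => B * (t - 1) + C * (t - 1) ^ 2 + E * t ^ q) (Set.Ici 0) 1) :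
    (1 - q) * E ≤ C := by
  have hderiv : HasDerivAt (fun t : ℝ => B * (t - 1) + C * (t - 1) ^ 2 + E * t ^ q)
      (B + q * E) 1 := by
    have hrpow := Real.hasDerivAt_rpow_const (x := 1) (p := q) (Or.inl one_ne_zero)
    have hsq := ((hasDerivAt_id (1 : ℝ)).sub_const 1).pow 2
    exact ((((hasDerivAt_id (1 : ℝ)).sub_const 1).const_mul B).add (hsq.const_mul C)).add
      (hrpow.const_mul E) |>.congr_deriv (by simp [mul_comm])
  have hfirst : B + q * E = 0 :=
    (hmin.isLocalMin (Ici_mem_nhds one_pos)).hasDerivAt_eq_zero hderiv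
  have hzero := isMinOn_iff.mp hmin 0 (Set.mem_Ici.mpr le_rfl)
  simp only [Real.one_rpow, Real.zero_rpow hq.ne'] at hzero
  linarith

theorem rpow_one_div_sub_le_of_mul_rpow_le {a c x q : ℝ} (ha : 0 < a) (hc : 0 ≤ c) (hx : 0 < x)
    (hq : q < 2) (h : c * x ^ q ≤ a * x ^ 2) : (c / a) ^ (1 / (2 - q)) ≤ x := by
  have h2q : 0 < 2 - q := by linarith
  have hpow : c / a ≤ x ^ (2 - q) := by
    rw [Real.rpow_sub hx, Real.rpow_two, le_div_iff₀ (by positivity), div_mul_eq_mul_div,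
      div_le_iff₀ ha]
    linarith
  calc (c / a) ^ (1 / (2 - q)) ≤ (x ^ (2 - q)) ^ (1 / (2 - q)) := by gcongr
    _ = x := by rw [← Real.rpow_mul hx.le, mul_one_div_cancel h2q.ne', Real.rpow_one]

theorem mulVec_update {m n : Type*} [Fintype n] [DecidableEq n] (K : Matrix m n ℝ)
    (α : n → ℝ) (i : n) (t : ℝ) :
    K *ᵥ Function.update α i t = K *ᵥ α + (t - α i) • K.col i := by
  rw [Pi.update_eq_sub_add_single, mulVec_add, mulVec_sub, mulVec_single, mulVec_single,
    op_smul_eq_smul, op_smul_eq_smul, sub_smul]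
  abel

section LqObjective

variable {m n : Type*} [Fintype m] [Fintype n]

-- The paper's `Φ_q` is `lqObjective K y (1 / N) γ q`.
noncomputable def lqObjective (K : Matrix m n ℝ) (y : m → ℝ) (w γ q : ℝ) (α : n → ℝ) : ℝ :=
  w * ∑ j, ((K *ᵥ α) j - y j) ^ 2 + γ * ∑ j, |α j| ^ q

variable [DecidableEq n]

theorem lqObjective_update (K : Matrix m n ℝ) (y : m → ℝ) (w γ q : ℝ) (α : n → ℝ) (i : n)
    (t : ℝ) :
    lqObjective K y w γ q (Function.update α i t) = lqObjective K y w γ q α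
      + w * (2 * (t - α i) * ∑ j, ((K *ᵥ α) j - y j) * K j i
        + (t - α i) ^ 2 * ∑ j, K j i ^ 2) + γ * (|t| ^ q - |α i| ^ q) := by
  have hfit : ∑ j, ((K *ᵥ Function.update α i t) j - y j) ^ 2 = ∑ j, ((K *ᵥ α) j - y j) ^ 2
      + (2 * (t - α i) * ∑ j, ((K *ᵥ α) j - y j) * K j i + (t - α i) ^ 2 * ∑ j, K j i ^ 2) := by
    simp only [mulVec_update, Pi.add_apply, Pi.smul_apply, col_apply, smul_eq_mul, mul_sum,
      ← sum_add_distrib]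
    exact sum_congr rfl fun j _ => by ring
  have hreg : ∑ j, |Function.update α i t j| ^ q = ∑ j, |α j| ^ q + (|t| ^ q - |α i| ^ q) := by
    have hcomp : ∀ j, |Function.update α i t j| ^ q
        = Function.update (fun j => |α j| ^ q) i (|t| ^ q) j :=
      Function.apply_update (fun _ z => |z| ^ q) α i t
    rw [sum_congr rfl fun j _ => hcomp j, sum_update_of_mem (mem_univ i),
      sdiff_singleton_eq_erase, ← add_sum_erase univ (fun j => |α j| ^ q) (mem_univ i)]
    ring
  unfold lqObjective
  rw [hfit, hreg]
  ring

theorem one_sub_mul_le_of_isMinOn_lqObjective {K : Matrix m n ℝ} {y : m → ℝ} {w γ q : ℝ}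
    (hq : 0 < q) {α : n → ℝ} (hmin : IsMinOn (lqObjective K y w γ q) Set.univ α) (i : n) :
    (1 - q) * (γ * |α i| ^ q) ≤ w * (∑ j, K j i ^ 2) * α i ^ 2 := by
  refine one_sub_mul_le_of_isMinOn (B := w * 2 * α i * ∑ j, ((K *ᵥ α) j - y j) * K j i) hq ?_
  refine isMinOn_iff.mpr fun t (ht : 0 ≤ t) => ?_
  have hray := isMinOn_univ_iff.mp hmin (Function.update α i (t * α i))
  rw [lqObjective_update, abs_mul, abs_of_nonneg ht, Real.mul_rpow ht (abs_nonneg _)] at hray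
  simp only [sub_self, Real.one_rpow]
  linear_combination hray

end LqObjective

theorem lq_minimizer_nonzero_coordinate_lower_bound_general
    (N : ℕ) (K : Matrix (Fin N) (Fin N) ℝ)
    (y : Fin N → ℝ) (q : ℝ) (hq0 : 0 < q) (hq1 : q < 1)
    (γ : ℝ) (hγ : 0 < γ) (κ : ℝ) (hκ : 0 < κ)
    (hKκ : ∀ i j, |K i j| ≤ κ)
    (αs : Fin N → ℝ)
    (hmin : ∀ α : Fin N → ℝ,
      (1 / N : ℝ) * ∑ i, ((K *ᵥ αs) i - y i) ^ 2 + γ * ∑ j, |αs j| ^ q ≤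
        (1 / N : ℝ) * ∑ i, ((K *ᵥ α) i - y i) ^ 2 + γ * ∑ j, |α j| ^ q) :
    ∀ i, αs i ≠ 0 →
      ((1 - q) / κ ^ 2) ^ ((1 : ℝ) / (2 - q)) * γ ^ ((1 : ℝ) / (2 - q)) ≤ |αs i| := by
  intro i hi
  have hcoord := one_sub_mul_le_of_isMinOn_lqObjective hq0 (isMinOn_univ_iff.mpr hmin) i
  have hcol : (1 / N : ℝ) * ∑ j, K j i ^ 2 ≤ κ ^ 2 := by
    have hN : (0 : ℝ) < N := by exact_mod_cast i.pos
    have hsum : ∑ j, K j i ^ 2 ≤ N * κ ^ 2 := by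
      simpa using sum_le_card_nsmul univ (fun j => K j i ^ 2) (κ ^ 2) fun j _ =>
        sq_abs (K j i) ▸ pow_le_pow_left₀ (abs_nonneg _) (hKκ j i) 2
    rw [one_div_mul_eq_div, div_le_iff₀ hN]
    linarith
  have hbound : (1 - q) * γ * |αs i| ^ q ≤ κ ^ 2 * |αs i| ^ 2 :=
    calc (1 - q) * γ * |αs i| ^ q = (1 - q) * (γ * |αs i| ^ q) := mul_assoc _ _ _
      _ ≤ (1 / N : ℝ) * (∑ j, K j i ^ 2) * αs i ^ 2 := hcoord
      _ ≤ κ ^ 2 * |αs i| ^ 2 := by rw [sq_abs]; gcongr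
  have h1q : 0 ≤ 1 - q := by linarith
  rw [← Real.mul_rpow (div_nonneg h1q (sq_nonneg κ)) hγ.le, div_mul_eq_mul_div]
  exact rpow_one_div_sub_le_of_mul_rpow_le (by positivity) (mul_nonneg h1q hγ.le)
    (abs_pos.mpr hi) (by linarith) hbound

/-- Any nonzero coordinate of a global minimizer of the
`ℓ_q`-regularized Gaussian kernel regression objective (`0 < q < 1`) has absolute
value at least `((1−q)/κ²)^{1/(2−q)} γ^{1/(2−q)}`, where `κ` bounds the kernel
matrix entries. -/
theorem lq_minimizer_nonzero_coordinate_lower_bound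
    (d N : ℕ) (hd : 0 < d) (hN : 0 < N)
    (x : Fin N → EuclideanSpace ℝ (Fin d)) (σ : ℝ) (hσ : 0 < σ)
    (K : Matrix (Fin N) (Fin N) ℝ)
    (hK : ∀ i j, K i j = Real.exp (-σ * ‖x i - x j‖ ^ 2))
    (y : Fin N → ℝ) (q : ℝ) (hq0 : 0 < q) (hq1 : q < 1)
    (γ : ℝ) (hγ : 0 < γ) (κ : ℝ) (hκ : 0 < κ)
    (hKκ : ∀ i j, |K i j| ≤ κ)
    (αs : Fin N → ℝ)
    (hmin : ∀ α : Fin N → ℝ,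
      (1 / N : ℝ) * ∑ i, ((K *ᵥ αs) i - y i) ^ 2 + γ * ∑ j, |αs j| ^ q ≤
        (1 / N : ℝ) * ∑ i, ((K *ᵥ α) i - y i) ^ 2 + γ * ∑ j, |α j| ^ q) :
    ∀ i, αs i ≠ 0 →
      ((1 - q) / κ ^ 2) ^ ((1 : ℝ) / (2 - q)) * γ ^ ((1 : ℝ) / (2 - q)) ≤ |αs i| :=
  lq_minimizer_nonzero_coordinate_lower_bound_general N K y q hq0 hq1 γ hγ κ hκ hKκ αs hmin
end

section
/- Let z = ((x_1,y_1),…,(x_N,y_N)) be a sample in ℝ^d × ℝ, let σ* > 0, q ∈ (0,1), γ > 0, N_sv a positive integer, and let κ ≥ 1 be a constant bounding the Gaussian kernel values (|exp(−σ‖x − x'‖²)| ≤ κ² for all σ > 0 and x, x'). Set λ = ((1−q)/κ²)^{q/(2−q)} γ^{2/(2−q)}. Let f_{z,λ} be any minimizer of E_z(f) + λ R₀(f) over the class F_{N_sv}. Let g : ℝ^d → ℝ be any function and define f_{z,γ}(·) = (1/N) Σ_{i=1}^N g(x_i) exp(−σ*‖· − x_i‖²). Let β¹ ∈ ℝ^N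 be any minimizer of E_z(Σ_{i=1}^N β_i exp(−σ*‖· − x_i‖²)) + γ Σ_{i=1}^N |β_i| over β ∈ ℝ^N (assume all these minimizers exist). Then E_z(f_{z,λ}) + λ R₀(f_{z,λ}) ≤ E_z(f_{z,γ}) + (γ/N) Σ_{i=1}^N |g(x_i)| + γ N^{1−q} (Σ_{i=1}^N |β¹_i|)^q. -/
open Finset

/-- The function `t ↦ Σ_k Σ_i α_{k,i} exp(−θ_k ‖t − x_i‖²)` represented by bandwidths
`θ` and coefficients `α`, anchored at the points `x_1, …, x_N`. -/
noncomputable def repFun {d N : ℕ} (x : Fin N → EuclideanSpace ℝ (Fin d)) {m : ℕ}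
    (θ : Fin m → ℝ) (α : Fin m → Fin N → ℝ) : EuclideanSpace ℝ (Fin d) → ℝ :=
  fun t => ∑ k, ∑ i, α k i * Real.exp (-(θ k) * ‖t - x i‖ ^ 2)

/-- `IsRep x f m θ α` : `(m, θ, α)` is a representation of `f` with positive
bandwidths, anchored at the points `x`. -/
def IsRep {d N : ℕ} (x : Fin N → EuclideanSpace ℝ (Fin d))
    (f : EuclideanSpace ℝ (Fin d) → ℝ) (m : ℕ) (θ : Fin m → ℝ)
    (α : Fin m → Fin N → ℝ) : Prop :=
  (∀ k, 0 < θ k) ∧ f = repFun x θ α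

/-- Membership in the class `F` of functions admitting some representation. -/
def InF {d N : ℕ} (x : Fin N → EuclideanSpace ℝ (Fin d))
    (f : EuclideanSpace ℝ (Fin d) → ℝ) : Prop :=
  ∃ m θ α, IsRep x f m θ α

/-- Membership in the subclass `F_{N_sv}` of functions admitting a representation
with at most `Nsv` bandwidths. -/
def InFsv {d N : ℕ} (x : Fin N → EuclideanSpace ℝ (Fin d)) (Nsv : ℕ)
    (f : EuclideanSpace ℝ (Fin d) → ℝ) : Prop :=
  ∃ m, m ≤ Nsv ∧ ∃ (θ : Fin m → ℝ) (α : Fin m → Fin N → ℝ), IsRep x f m θ α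

/-- The sparsity measure `R₀(f)`: the minimal number of nonzero coefficients over
all representations of `f`. -/
noncomputable def R0 {d N : ℕ} (x : Fin N → EuclideanSpace ℝ (Fin d))
    (f : EuclideanSpace ℝ (Fin d) → ℝ) : ℕ :=
  sInf {n : ℕ | ∃ m θ α, IsRep x f m θ α ∧
    ({p : Fin m × Fin N | α p.1 p.2 ≠ 0} : Set (Fin m × Fin N)).ncard = n}

/-- The empirical error `E_z(f) = (1/N) Σ_i (f(x_i) − y_i)²`. -/
noncomputable def empErr {d N : ℕ} (x : Fin N → EuclideanSpace ℝ (Fin d))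
    (y : Fin N → ℝ) (f : EuclideanSpace ℝ (Fin d) → ℝ) : ℝ :=
  (1 / N : ℝ) * ∑ i, (f (x i) - y i) ^ 2

/-!
Start from the ℓ¹-minimizer `β¹` with the extra penalty `γ Σ |β_i|^q` and round its
coefficients one at a time: a coefficient `u` with `0 < |u| < T` is replaced by `0` or by
`±T`, whichever gives the smaller penalized square loss. The loss is quadratic in each
coordinate with curvature at most `κ²`, so the mixture of the two choices with mean `u`
(weights `1 - |u|/T` and `|u|/T`) raises the expected loss by at most `κ² |u| (T - |u|)`, and
the concavity of `t ↦ t^q` pays for this as soon as `κ² T^(2-q) ≤ (1 - q) γ`; the threshold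
`T = ((1-q) γ / κ²)^(1/(2-q))` is chosen so that `λ = γ T^q`. After rounding, every nonzero
coefficient costs at least `γ T^q = λ`, which produces an element of `F_{N_sv}` (one
bandwidth `σ*`) whose `ℓ₀`-objective is at most `E_z(β¹) + γ Σ |β¹_i|^q`. Hölder bounds
`Σ |β¹_i|^q ≤ N^(1-q) (Σ |β¹_i|)^q`, and minimality of `β¹` compares it with the coefficients
`g(x_i)/N` of `f_{z,γ}`.
-/

open Matrix

theorem Real.sum_rpow_le_card_rpow_mul_rpow_sum {ι : Type*} (s : Finset ι) (f : ι → ℝ) {q : ℝ}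
    (hq0 : 0 < q) (hq1 : q < 1) :
    ∑ i ∈ s, |f i| ^ q ≤ (#s : ℝ) ^ (1 - q) * (∑ i ∈ s, |f i|) ^ q := by
  have hpq : Real.HolderTriple (q / (1 - q)) 1 q :=
    ⟨by field_simp; ring, div_pos hq0 (by linarith), one_pos⟩
  have h := Real.Lr_rpow_le_Lp_mul_Lq s (fun _ => (1 : ℝ)) f hpq
  have hexp : q / (q / (1 - q)) = 1 - q := by field_simp
  simpa [hexp] using h

section Rounding
variable {c γ q T : ℝ}

theorem mul_mul_sub_add_mul_rpow_le (hq0 : 0 < q) (hq1 : q < 1) (hc : 0 ≤ c)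
    (hcT : c * T ^ (2 - q) ≤ (1 - q) * γ) {u : ℝ} (hu : 0 < u) (huT : u < T) :
    c * T * u * (T - u) + γ * u * T ^ q ≤ γ * T * u ^ q := by
  have hT : 0 < T := hu.trans huT
  have hγ : 0 ≤ γ := by
    have := mul_nonneg hc (Real.rpow_nonneg hT.le (2 - q)); nlinarith
  have hsplit : u ^ q * u ^ (1 - q) = u := by
    rw [← Real.rpow_add hu]; simp
  have hT2 : T * T ^ (1 - q) = T ^ (2 - q) := by
    rw [← Real.rpow_one_add' hT.le (by linarith)]; ring_nf
  have hAMGM : u ^ (1 - q) * T ^ q ≤ (1 - q) * u + q * T := by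
    simpa using Real.geom_mean_le_arith_mean2_weighted (by linarith) hq0.le hu.le hT.le
      (by ring : 1 - q + q = 1)
  have hmono : u ^ (1 - q) ≤ T ^ (1 - q) := Real.rpow_le_rpow hu.le huT.le (by linarith)
  have huq : 0 ≤ u ^ q := Real.rpow_nonneg hu.le q
  have hgain : γ * u ^ q * ((1 - q) * (T - u)) ≤ γ * T * u ^ q - γ * u * T ^ q := by
    have : γ * u * T ^ q = γ * u ^ q * (u ^ (1 - q) * T ^ q) := by
      linear_combination (-γ * T ^ q) * hsplit
    rw [this]; nlinarith [mul_nonneg hγ huq]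
  have hcost : c * T * u ≤ (1 - q) * γ * u ^ q := by
    calc c * T * u = c * u ^ q * (T * u ^ (1 - q)) := by
          linear_combination (-(c * T)) * hsplit
      _ ≤ c * u ^ q * (T * T ^ (1 - q)) := by gcongr
      _ = u ^ q * (c * T ^ (2 - q)) := by rw [hT2]; ring
      _ ≤ u ^ q * ((1 - q) * γ) := by gcongr
      _ = (1 - q) * γ * u ^ q := by ring
  nlinarith [mul_le_mul_of_nonneg_right hcost (by linarith : 0 ≤ T - u)]

theorem exists_eq_zero_or_abs_eq_and_le_of_pos (hq0 : 0 < q) (hq1 : q < 1) (hc : 0 ≤ c)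
    (hcT : c * T ^ (2 - q) ≤ (1 - q) * γ) {u L A : ℝ} (hA : A ≤ c) (hu : 0 < u) (huT : u < T) :
    ∃ b, (b = 0 ∨ |b| = T) ∧ (b - u) * L + (b - u) ^ 2 * A + γ * |b| ^ q ≤ γ * |u| ^ q := by
  have hT : 0 < T := hu.trans huT
  by_contra! h
  have h0 := h 0 (Or.inl rfl)
  have hT' := h T (Or.inr (abs_of_pos hT))
  simp only [abs_zero, Real.zero_rpow hq0.ne', abs_of_pos hu, abs_of_pos hT] at h0 hT'
  have hψ := mul_mul_sub_add_mul_rpow_le hq0 hq1 hc hcT hu huT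
  have hAc : T * u * (T - u) * A ≤ T * u * (T - u) * c :=
    mul_le_mul_of_nonneg_left hA (by have := sub_pos.2 huT; positivity)
  -- weights `T - u` and `u` mix the candidates `0` and `T` into mean `u`
  nlinarith [mul_lt_mul_of_pos_left h0 (sub_pos.2 huT), mul_lt_mul_of_pos_left hT' hu]

theorem exists_eq_zero_or_abs_eq_and_le (hq0 : 0 < q) (hq1 : q < 1) (hc : 0 ≤ c)
    (hcT : c * T ^ (2 - q) ≤ (1 - q) * γ) {u L A : ℝ} (hA : A ≤ c) (hu : u ≠ 0) (huT : |u| < T) :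
    ∃ b, (b = 0 ∨ |b| = T) ∧ (b - u) * L + (b - u) ^ 2 * A + γ * |b| ^ q ≤ γ * |u| ^ q := by
  rcases hu.lt_or_gt with hneg | hpos
  · rw [abs_of_neg hneg] at huT
    obtain ⟨b, hb, hle⟩ := exists_eq_zero_or_abs_eq_and_le_of_pos (L := -L) hq0 hq1 hc hcT hA
      (neg_pos.2 hneg) huT
    refine ⟨-b, by rwa [neg_eq_zero, abs_neg], ?_⟩
    calc (-b - u) * L + (-b - u) ^ 2 * A + γ * |-b| ^ q
        = (b - -u) * -L + (b - -u) ^ 2 * A + γ * |b| ^ q := by rw [abs_neg]; ring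
      _ ≤ γ * |-u| ^ q := hle
      _ = γ * |u| ^ q := by rw [abs_neg]
  · rw [abs_of_pos hpos] at huT
    exact exists_eq_zero_or_abs_eq_and_le_of_pos hq0 hq1 hc hcT hA hpos huT

end Rounding

noncomputable def sqLoss {n : ℕ} {ι : Type*} [Fintype ι] (K : Matrix (Fin n) ι ℝ)
    (y : Fin n → ℝ) (β : ι → ℝ) : ℝ :=
  (1 / n : ℝ) * ∑ j, ((K *ᵥ β) j - y j) ^ 2

theorem one_div_mul_sum_sq_le {n : ℕ} {ι : Type*} (K : Matrix (Fin n) ι ℝ) {c : ℝ} (hc : 0 ≤ c)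
    (hK : ∀ j i, K j i ^ 2 ≤ c) (i : ι) : (1 / n : ℝ) * ∑ j, K j i ^ 2 ≤ c := by
  rcases Nat.eq_zero_or_pos n with rfl | hn
  · simpa using hc
  calc (1 / n : ℝ) * ∑ j, K j i ^ 2 ≤ (1 / n : ℝ) * ∑ _j : Fin n, c := by
        gcongr with j; exact hK j i
    _ = c := by simp [field]

section
variable {ι : Type*} [Fintype ι] [DecidableEq ι]

theorem sum_comp_update_add {M : Type*} [AddCommMonoid M] {α : Type*} (g : α → M)
    (β : ι → α) (i : ι) (b : α) :
    ∑ j, g (Function.update β i b j) + g (β i) = ∑ j, g (β j) + g b := by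
  rw [Fintype.sum_eq_add_sum_compl i, Fintype.sum_eq_add_sum_compl i (fun j => g (β j)),
    Function.update_self,
    Finset.sum_congr rfl fun j hj => by rw [Function.update_of_ne (by simpa using hj)]]
  abel

theorem mulVec_update_apply {n : ℕ} (K : Matrix (Fin n) ι ℝ) (β : ι → ℝ) (i : ι) (b : ℝ)
    (j : Fin n) : (K *ᵥ Function.update β i b) j = (K *ᵥ β) j + (b - β i) * K j i := by
  have hβ : Function.update β i b = β + Pi.single i (b - β i) := by
    ext l
    rcases eq_or_ne l i with rfl | hl <;> simp [*]
  rw [hβ, mulVec_add, Pi.add_apply, mulVec, mulVec, dotProduct_single]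
  ring

theorem sqLoss_update {n : ℕ} (K : Matrix (Fin n) ι ℝ) (y : Fin n → ℝ) (β : ι → ℝ) (i : ι) :
    ∃ L, ∀ b, sqLoss K y (Function.update β i b) =
      sqLoss K y β + (b - β i) * L + (b - β i) ^ 2 * ((1 / n : ℝ) * ∑ j, K j i ^ 2) := by
  refine ⟨(2 / n : ℝ) * ∑ j, ((K *ᵥ β) j - y j) * K j i, fun b => ?_⟩
  simp only [sqLoss, mulVec_update_apply]
  have : ∀ j, ((K *ᵥ β) j + (b - β i) * K j i - y j) ^ 2 =
      ((K *ᵥ β) j - y j) ^ 2 + (b - β i) * (2 * (((K *ᵥ β) j - y j) * K j i)) +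
        (b - β i) ^ 2 * K j i ^ 2 := fun j => by ring
  simp only [this, Finset.sum_add_distrib, ← Finset.mul_sum]
  ring

theorem exists_forall_and_le_of_forall_exists_update_le {α R : Type*} [Preorder R]
    (F : (ι → α) → R) (P : α → Prop)
    (hF : ∀ β i, ∃ b, P b ∧ F (Function.update β i b) ≤ F β) (β : ι → α) :
    ∃ β', (∀ i, P (β' i)) ∧ F β' ≤ F β := by
  suffices ∀ s : Finset ι, ∃ β', (∀ i ∈ s, P (β' i)) ∧ F β' ≤ F β by
    simpa using this univ
  intro s
  induction s using Finset.induction_on with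
  | empty => exact ⟨β, by simp, le_rfl⟩
  | insert i s hi ih =>
    obtain ⟨β', hβ's, hβ'⟩ := ih
    obtain ⟨b, hb, hle⟩ := hF β' i
    refine ⟨Function.update β' i b, ?_, hle.trans hβ'⟩
    rintro j hj
    rcases eq_or_ne j i with rfl | hji
    · simpa using hb
    · simpa [hji] using hβ's j ((mem_insert.1 hj).resolve_left hji)

theorem exists_sparse_sqLoss_add_le {n : ℕ} (K : Matrix (Fin n) ι ℝ) (y : Fin n → ℝ)
    {c γ q T : ℝ} (hq0 : 0 < q) (hq1 : q < 1) (hc : 0 ≤ c) (hK : ∀ j i, K j i ^ 2 ≤ c)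
    (hcT : c * T ^ (2 - q) ≤ (1 - q) * γ) (β : ι → ℝ) :
    ∃ β', (∀ i, β' i = 0 ∨ T ≤ |β' i|) ∧
      sqLoss K y β' + γ * ∑ i, |β' i| ^ q ≤ sqLoss K y β + γ * ∑ i, |β i| ^ q := by
  refine exists_forall_and_le_of_forall_exists_update_le
    (fun β => sqLoss K y β + γ * ∑ i, |β i| ^ q) (fun b => b = 0 ∨ T ≤ |b|) (fun β i => ?_) β
  by_cases hgood : β i = 0 ∨ T ≤ |β i|
  · exact ⟨β i, hgood, by simp⟩
  simp only [not_or, not_le] at hgood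
  obtain ⟨L, hL⟩ := sqLoss_update K y β i
  obtain ⟨b, hb, hle⟩ := exists_eq_zero_or_abs_eq_and_le hq0 hq1 hc hcT
    (one_div_mul_sum_sq_le K hc hK i) (L := L) hgood.1 hgood.2
  refine ⟨b, hb.imp_right ge_of_eq, ?_⟩
  have hpen := sum_comp_update_add (fun t => |t| ^ q) β i b
  rw [hL b]
  linear_combination hle + γ * hpen

end

theorem card_filter_ne_zero_mul_rpow_le_sum {ι : Type*} [Fintype ι] {β : ι → ℝ} {q T : ℝ}
    (hq : 0 ≤ q) (hT : 0 ≤ T) (hβ : ∀ i, β i = 0 ∨ T ≤ |β i|) :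
    (#{i | β i ≠ 0} : ℝ) * T ^ q ≤ ∑ i, |β i| ^ q := by
  calc (#{i | β i ≠ 0} : ℝ) * T ^ q = ∑ i ∈ {i | β i ≠ 0}, T ^ q := by simp
    _ ≤ ∑ i ∈ {i | β i ≠ 0}, |β i| ^ q := by
        gcongr with i hi
        exact (hβ i).resolve_left (mem_filter.1 hi).2
    _ ≤ ∑ i, |β i| ^ q := sum_le_univ_sum_of_nonneg fun i => by positivity

theorem rpow_div_mul_rpow_div_eq {a γ q : ℝ} (ha : 0 ≤ a) (hγ : 0 < γ) (hq : q ≠ 2) :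
    a ^ (q / (2 - q)) * γ ^ (2 / (2 - q)) = γ * ((a * γ) ^ (2 - q)⁻¹) ^ q := by
  have h2q : 2 - q ≠ 0 := sub_ne_zero.2 hq.symm
  rw [← Real.rpow_mul (by positivity), Real.mul_rpow ha hγ.le,
    show 2 / (2 - q) = 1 + (2 - q)⁻¹ * q by field_simp; ring, Real.rpow_add hγ, Real.rpow_one,
    inv_mul_eq_div]
  ring

section Gaussian
variable {d N : ℕ} (x : Fin N → EuclideanSpace ℝ (Fin d)) (σ : ℝ)

noncomputable def gaussExpansion (β : Fin N → ℝ) : EuclideanSpace ℝ (Fin d) → ℝ :=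
  fun t => ∑ i, β i * Real.exp (-σ * ‖t - x i‖ ^ 2)

noncomputable def gaussGram : Matrix (Fin N) (Fin N) ℝ :=
  Matrix.of fun j i => Real.exp (-σ * ‖x j - x i‖ ^ 2)

theorem empErr_gaussExpansion (y : Fin N → ℝ) (β : Fin N → ℝ) :
    empErr x y (gaussExpansion x σ β) = sqLoss (gaussGram x σ) y β := by
  simp only [empErr, sqLoss, gaussExpansion, gaussGram, mulVec, dotProduct, of_apply, mul_comm]

theorem gaussGram_sq_le_one {σ : ℝ} (hσ : 0 ≤ σ) (j i : Fin N) : gaussGram x σ j i ^ 2 ≤ 1 := by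
  refine pow_le_one₀ (Real.exp_pos _).le (Real.exp_le_one_iff.2 ?_)
  have := mul_nonneg hσ (sq_nonneg ‖x j - x i‖)
  linarith

theorem gaussExpansion_div (β : Fin N → ℝ) (a : ℝ) :
    gaussExpansion x σ (fun i => β i / a) =
      fun t => 1 / a * ∑ i, β i * Real.exp (-σ * ‖t - x i‖ ^ 2) := by
  ext t
  simp only [gaussExpansion, mul_sum]
  exact sum_congr rfl fun i _ => by ring

variable {σ}

theorem isRep_gaussExpansion (hσ : 0 < σ) (β : Fin N → ℝ) :
    IsRep x (gaussExpansion x σ β) 1 (fun _ => σ) (fun _ => β) :=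
  ⟨fun _ => hσ, by ext t; simp [gaussExpansion, repFun]⟩

theorem inFsv_gaussExpansion (hσ : 0 < σ) {Nsv : ℕ} (hNsv : 0 < Nsv) (β : Fin N → ℝ) :
    InFsv x Nsv (gaussExpansion x σ β) :=
  ⟨1, hNsv, _, _, isRep_gaussExpansion x hσ β⟩

theorem R0_gaussExpansion_le (hσ : 0 < σ) (β : Fin N → ℝ) :
    R0 x (gaussExpansion x σ β) ≤ #{i | β i ≠ 0} := by
  refine Nat.sInf_le ⟨1, _, _, isRep_gaussExpansion x hσ β, ?_⟩
  have : {p : Fin 1 × Fin N | β p.2 ≠ 0} = Set.univ ×ˢ {i | β i ≠ 0} := by ext; simp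
  simp [this, Set.ncard_eq_toFinset_card']

theorem R0_gaussExpansion_mul_rpow_le (hσ : 0 < σ) {β : Fin N → ℝ} {q T : ℝ} (hq : 0 ≤ q)
    (hT : 0 ≤ T) (hβ : ∀ i, β i = 0 ∨ T ≤ |β i|) :
    (R0 x (gaussExpansion x σ β) : ℝ) * T ^ q ≤ ∑ i, |β i| ^ q := by
  refine le_trans ?_ (card_filter_ne_zero_mul_rpow_le_sum hq hT hβ)
  gcongr
  exact_mod_cast R0_gaussExpansion_le x hσ β

end Gaussian

theorem l0_minimizer_comparison_general
    (d N : ℕ)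
    (x : Fin N → EuclideanSpace ℝ (Fin d)) (y : Fin N → ℝ)
    (σ : ℝ) (hσ : 0 < σ) (q : ℝ) (hq0 : 0 < q) (hq1 : q < 1)
    (γ : ℝ) (hγ : 0 < γ) (Nsv : ℕ) (hNsv : 0 < Nsv)
    (κ : ℝ) (hκ : 1 ≤ κ)
    (lam : ℝ)
    (hlam : lam = ((1 - q) / κ ^ 2) ^ (q / (2 - q)) * γ ^ (2 / (2 - q)))
    (fzl : EuclideanSpace ℝ (Fin d) → ℝ)
    (hfzlmin : ∀ f : EuclideanSpace ℝ (Fin d) → ℝ, InFsv x Nsv f →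
      empErr x y fzl + lam * (R0 x fzl : ℝ) ≤ empErr x y f + lam * (R0 x f : ℝ))
    (g : EuclideanSpace ℝ (Fin d) → ℝ)
    (fzg : EuclideanSpace ℝ (Fin d) → ℝ)
    (hfzg : fzg = fun t => (1 / N : ℝ) * ∑ i, g (x i) * Real.exp (-σ * ‖t - x i‖ ^ 2))
    (β1 : Fin N → ℝ)
    (hβ1 : ∀ β : Fin N → ℝ,
      empErr x y (fun t => ∑ i, β1 i * Real.exp (-σ * ‖t - x i‖ ^ 2)) + γ * ∑ i, |β1 i| ≤
        empErr x y (fun t => ∑ i, β i * Real.exp (-σ * ‖t - x i‖ ^ 2)) + γ * ∑ i, |β i|) :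
    empErr x y fzl + lam * (R0 x fzl : ℝ) ≤
      empErr x y fzg + (γ / N) * ∑ i, |g (x i)| +
        γ * (N : ℝ) ^ (1 - q) * (∑ i, |β1 i|) ^ q := by
  set T := ((1 - q) / κ ^ 2 * γ) ^ (2 - q)⁻¹
  have hcT : κ ^ 2 * T ^ (2 - q) = (1 - q) * γ := by
    rw [Real.rpow_inv_rpow (by positivity) (by linarith)]
    field_simp
  have hlamT : lam = γ * T ^ q :=
    hlam.trans (rpow_div_mul_rpow_div_eq (div_nonneg (by linarith) (by positivity)) hγ
      (by linarith))
  obtain ⟨β, hβT, hβ⟩ := exists_sparse_sqLoss_add_le (gaussGram x σ) y hq0 hq1 (by positivity)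
    (fun j i => (gaussGram_sq_le_one x hσ.le j i).trans (one_le_pow₀ hκ)) hcT.le β1
  have hR0 := R0_gaussExpansion_mul_rpow_le x hσ hq0.le (by positivity) hβT
  have hHolder := Real.sum_rpow_le_card_rpow_mul_rpow_sum univ β1 hq0 hq1
  have hg : empErr x y (gaussExpansion x σ β1) + γ * ∑ i, |β1 i| ≤
      empErr x y fzg + γ * ∑ i, |g (x i) / N| := by
    rw [hfzg, ← gaussExpansion_div]
    exact hβ1 _
  simp only [empErr_gaussExpansion, abs_div, Nat.abs_cast, ← sum_div, mul_div_assoc', card_univ,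
    Fintype.card_fin] at hg hHolder
  have hℓ1 : 0 ≤ γ * ∑ i, |β1 i| := by positivity
  calc empErr x y fzl + lam * R0 x fzl
      ≤ empErr x y (gaussExpansion x σ β) + lam * R0 x (gaussExpansion x σ β) :=
        hfzlmin _ (inFsv_gaussExpansion x hσ hNsv β)
    _ ≤ sqLoss (gaussGram x σ) y β + γ * ∑ i, |β i| ^ q := by
        rw [empErr_gaussExpansion, hlamT]
        nlinarith [mul_le_mul_of_nonneg_left hR0 hγ.le]
    _ ≤ sqLoss (gaussGram x σ) y β1 + γ * ∑ i, |β1 i| ^ q := hβ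
    _ ≤ empErr x y fzg + (γ / N) * ∑ i, |g (x i)| + γ * (N : ℝ) ^ (1 - q) * (∑ i, |β1 i|) ^ q := by
        rw [div_mul_eq_mul_div]
        nlinarith [mul_le_mul_of_nonneg_left hHolder hγ.le]

/-- Comparison inequality for the `ℓ₀`-regularized minimizer over
`F_{N_sv}`: with `λ = ((1−q)/κ²)^{q/(2−q)} γ^{2/(2−q)}`,
`E_z(f_{z,λ}) + λ R₀(f_{z,λ}) ≤ E_z(f_{z,γ}) + (γ/N) Σ_i |g(x_i)| + γ N^{1−q} (Σ_i |β¹_i|)^q`. -/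
theorem l0_minimizer_comparison
    (d N : ℕ) (hd : 0 < d) (hN : 0 < N)
    (x : Fin N → EuclideanSpace ℝ (Fin d)) (y : Fin N → ℝ)
    (σ : ℝ) (hσ : 0 < σ) (q : ℝ) (hq0 : 0 < q) (hq1 : q < 1)
    (γ : ℝ) (hγ : 0 < γ) (Nsv : ℕ) (hNsv : 0 < Nsv)
    (κ : ℝ) (hκ : 1 ≤ κ)
    (hker : ∀ s : ℝ, 0 < s → ∀ u v : EuclideanSpace ℝ (Fin d),
      |Real.exp (-s * ‖u - v‖ ^ 2)| ≤ κ ^ 2)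
    (lam : ℝ)
    (hlam : lam = ((1 - q) / κ ^ 2) ^ (q / (2 - q)) * γ ^ (2 / (2 - q)))
    (fzl : EuclideanSpace ℝ (Fin d) → ℝ)
    (hfzl : InFsv x Nsv fzl)
    (hfzlmin : ∀ f : EuclideanSpace ℝ (Fin d) → ℝ, InFsv x Nsv f →
      empErr x y fzl + lam * (R0 x fzl : ℝ) ≤ empErr x y f + lam * (R0 x f : ℝ))
    (g : EuclideanSpace ℝ (Fin d) → ℝ)
    (fzg : EuclideanSpace ℝ (Fin d) → ℝ)
    (hfzg : fzg = fun t => (1 / N : ℝ) * ∑ i, g (x i) * Real.exp (-σ * ‖t - x i‖ ^ 2))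
    (β1 : Fin N → ℝ)
    (hβ1 : ∀ β : Fin N → ℝ,
      empErr x y (fun t => ∑ i, β1 i * Real.exp (-σ * ‖t - x i‖ ^ 2)) + γ * ∑ i, |β1 i| ≤
        empErr x y (fun t => ∑ i, β i * Real.exp (-σ * ‖t - x i‖ ^ 2)) + γ * ∑ i, |β i|) :
    empErr x y fzl + lam * (R0 x fzl : ℝ) ≤
      empErr x y fzg + (γ / N) * ∑ i, |g (x i)| +
        γ * (N : ℝ) ^ (1 - q) * (∑ i, |β1 i|) ^ q :=
  l0_minimizer_comparison_general d N x y σ hσ q hq0 hq1 γ hγ Nsv hNsv κ hκ lam hlam fzl hfzlmin g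
    fzg hfzg β1 hβ1
end

section
/- Let d, N be positive integers, x_1,…,x_N ∈ ℝ^d, and let ε = (ε_1,…,ε_N) be uniformly distributed on {−1,1}^N (i.e. ε_1,…,ε_N are independent Rademacher variables). Then for every constant κ ≥ 1, the expected Rademacher chaos of order two of the Gaussian kernel class satisfies E_ε[ sup_{σ ∈ (0,∞)} | (1/N) Σ_{1 ≤ i < j ≤ N} ε_i ε_j exp(−σ‖x_i − x_j‖²) | ] ≤ (1 + 192e)κ². -/
/-!
For fixed signs, enumerate the pairs `i < j` by increasing `‖x i - x j‖ ^ 2`. Along this order the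
weights `exp (-σ ‖x i - x j‖ ^ 2)` decrease and lie in `[0, 1]`, so by Abel summation the
supremum over `σ` is at most the largest partial sum `|S k|` of the chaos `∑ ε_i ε_j` along the
enumeration. Dyadic chaining bounds `max_k |S k|` by the sum over the scales `2 ^ w` of the
largest increment of `S` over a dyadic block of length `2 ^ w`. Such an increment is an order-two
chaos in at most `2 ^ w` pairs, so its fourth moment is at most `27 · 4 ^ w` (induction on the
largest vertex, with Cauchy–Schwarz for the cross term). Hence the mean of the largest of the
`2 ^ (L - w)` increments at scale `w` is at most `(27 · 2 ^ (L - w) · 4 ^ w) ^ (1/4)`, which is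
`≤ 4 N (6/7) ^ (L - w)` once `2 ^ L ≤ 2 N ^ 2`, and the geometric series over the scales sums to
`E sup ≤ 24`.
-/

open Finset

section Rademacher

variable {ι : Type*}

def rademacher (s : ι → Bool) (i : ι) : ℝ := if s i then 1 else -1

lemma rademacher_sq (s : ι → Bool) (i : ι) : rademacher s i ^ 2 = 1 := by
  unfold rademacher; split_ifs <;> norm_num

lemma rademacher_congr {s t : ι → Bool} {i : ι} (h : s i = t i) :
    rademacher s i = rademacher t i := by
  simp only [rademacher, h]

lemma dependsOn_sum_rademacher (T : Finset ι) :
    DependsOn (fun s => ∑ i ∈ T, rademacher s i) T := fun _ _ h =>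
  sum_congr rfl fun i hi => rademacher_congr (h i hi)

variable [Fintype ι] [DecidableEq ι]

lemma sum_one_eq_two_pow : ∑ _s : ι → Bool, (1 : ℝ) = 2 ^ Fintype.card ι := by
  simp

variable {S : Set ι} {j : ι} {X Y : (ι → Bool) → ℝ}

/-- Flipping the sign of coordinate `j` is an involution that negates the summand. -/
lemma sum_rademacher_mul_eq_zero (hj : j ∉ S) (hX : DependsOn X S) :
    ∑ s, rademacher s j * X s = 0 := by
  have hinv : Function.Involutive fun s : ι → Bool => Function.update s j (!s j) := fun s => by
    ext i; by_cases hi : i = j <;> simp [Function.update, hi]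
  have hflip : ∀ s, rademacher (Function.update s j (!s j)) j * X (Function.update s j (!s j))
      = -(rademacher s j * X s) := by
    intro s
    have hXs : X (Function.update s j (!s j)) = X s :=
      hX fun i hi => Function.update_of_ne (ne_of_mem_of_not_mem hi hj) _ _
    rw [hXs]
    cases h : s j <;> simp [rademacher, h]
  have := Equiv.sum_comp hinv.toPerm fun s => rademacher s j * X s
  simp only [Function.Involutive.coe_toPerm] at this
  rw [Finset.sum_congr rfl fun s _ => hflip s, Finset.sum_neg_distrib] at this
  linarith

lemma sum_add_rademacher_mul_sq (hj : j ∉ S) (hX : DependsOn X S) (hY : DependsOn Y S) :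
    ∑ s, (X s + rademacher s j * Y s) ^ 2 = ∑ s, X s ^ 2 + ∑ s, Y s ^ 2 := by
  have hcross := sum_rademacher_mul_eq_zero hj (X := fun s => 2 * X s * Y s)
    fun s t h => by simp only [hX h, hY h]
  have hexp : ∀ s, (X s + rademacher s j * Y s) ^ 2
      = X s ^ 2 + Y s ^ 2 + rademacher s j * (2 * X s * Y s) := fun s => by
    linear_combination Y s ^ 2 * rademacher_sq s j
  simp only [hexp, sum_add_distrib, hcross, add_zero]

lemma sum_add_rademacher_mul_pow_four (hj : j ∉ S) (hX : DependsOn X S) (hY : DependsOn Y S) :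
    ∑ s, (X s + rademacher s j * Y s) ^ 4
      = ∑ s, X s ^ 4 + 6 * ∑ s, X s ^ 2 * Y s ^ 2 + ∑ s, Y s ^ 4 := by
  have hodd := sum_rademacher_mul_eq_zero hj (X := fun s => 4 * X s ^ 3 * Y s + 4 * X s * Y s ^ 3)
    fun s t h => by simp only [hX h, hY h]
  have hexp : ∀ s, (X s + rademacher s j * Y s) ^ 4
      = X s ^ 4 + 6 * (X s ^ 2 * Y s ^ 2) + Y s ^ 4
        + rademacher s j * (4 * X s ^ 3 * Y s + 4 * X s * Y s ^ 3) := fun s => by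
    linear_combination (6 * X s ^ 2 * Y s ^ 2 + 4 * X s * Y s ^ 3 * rademacher s j
      + Y s ^ 4 * (rademacher s j ^ 2 + 1)) * rademacher_sq s j
  simp only [hexp, sum_add_distrib, hodd, add_zero, mul_sum]

lemma sum_sum_rademacher_sq (T : Finset ι) :
    ∑ s, (∑ i ∈ T, rademacher s i) ^ 2 = #T * 2 ^ Fintype.card ι := by
  induction T using Finset.induction_on with
  | empty => simp
  | insert t T ht ih =>
    have hsplit : ∀ s, ∑ i ∈ insert t T, rademacher s i
        = ∑ i ∈ T, rademacher s i + rademacher s t * 1 := fun s => by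
      rw [sum_insert ht]; ring
    simp only [hsplit]
    rw [sum_add_rademacher_mul_sq ht (dependsOn_sum_rademacher T) (dependsOn_const 1 |>.mono
      (Set.empty_subset _)), ih, card_insert_of_notMem ht]
    simp only [one_pow, sum_one_eq_two_pow]
    push_cast
    ring

lemma sum_sum_rademacher_pow_four_le (T : Finset ι) :
    ∑ s, (∑ i ∈ T, rademacher s i) ^ 4 ≤ 3 * #T ^ 2 * 2 ^ Fintype.card ι := by
  induction T using Finset.induction_on with
  | empty => simp
  | insert t T ht ih =>
    have hsplit : ∀ s, ∑ i ∈ insert t T, rademacher s i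
        = ∑ i ∈ T, rademacher s i + rademacher s t * 1 := fun s => by
      rw [sum_insert ht]; ring
    simp only [hsplit]
    rw [sum_add_rademacher_mul_pow_four ht (dependsOn_sum_rademacher T) (dependsOn_const 1 |>.mono
      (Set.empty_subset _)), card_insert_of_notMem ht]
    simp only [one_pow, mul_one, sum_one_eq_two_pow, sum_sum_rademacher_sq]
    push_cast
    nlinarith [pow_pos (two_pos (α := ℝ)) (Fintype.card ι)]

/-- The cross term is handled by Cauchy–Schwarz, and `27 q² + 6 · 9 q t + 3 t² ≤ 27 (q + t)²`. -/
lemma sum_add_rademacher_mul_sum_pow_four_le {T : Finset ι} (hj : j ∉ S) (hT : ↑T ⊆ S)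
    (hX : DependsOn X S) {q : ℕ} (hX4 : ∑ s, X s ^ 4 ≤ 27 * q ^ 2 * 2 ^ Fintype.card ι) :
    ∑ s, (X s + rademacher s j * ∑ i ∈ T, rademacher s i) ^ 4
      ≤ 27 * (q + #T) ^ 2 * 2 ^ Fintype.card ι := by
  have hY4 := sum_sum_rademacher_pow_four_le T
  have hXY : ∑ s, X s ^ 2 * (∑ i ∈ T, rademacher s i) ^ 2
      ≤ 9 * q * #T * 2 ^ Fintype.card ι := by
    refine le_of_pow_le_pow_left₀ two_ne_zero (by positivity) ?_
    calc _ ≤ (∑ s, X s ^ 4) * ∑ s, (∑ i ∈ T, rademacher s i) ^ 4 := by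
          have hsq : ∀ z : ℝ, (z ^ 2) ^ 2 = z ^ 4 := fun z => by ring
          have := sum_mul_sq_le_sq_mul_sq univ (fun s => X s ^ 2)
            (fun s => (∑ i ∈ T, rademacher s i) ^ 2)
          simp only [hsq] at this
          exact this
      _ ≤ (27 * q ^ 2 * 2 ^ Fintype.card ι) * (3 * #T ^ 2 * 2 ^ Fintype.card ι) :=
          mul_le_mul hX4 hY4 (sum_nonneg fun _ _ => by positivity) (by positivity)
      _ = _ := by ring
  rw [sum_add_rademacher_mul_pow_four hj hX ((dependsOn_sum_rademacher T).mono hT)]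
  nlinarith [pow_pos (two_pos (α := ℝ)) (Fintype.card ι)]

end Rademacher

lemma sum_chaos_pow_four_le {ι : Type*} [Fintype ι] [LinearOrder ι] (Q : Finset (ι × ι))
    (hQ : ∀ p ∈ Q, p.1 < p.2) :
    ∑ s, (∑ p ∈ Q, rademacher s p.1 * rademacher s p.2) ^ 4
      ≤ 27 * #Q ^ 2 * 2 ^ Fintype.card ι := by
  suffices ∀ V : Finset ι, ∀ Q : Finset (ι × ι), (∀ p ∈ Q, p.1 < p.2 ∧ p.2 ∈ V) →
      ∑ s, (∑ p ∈ Q, rademacher s p.1 * rademacher s p.2) ^ 4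
        ≤ 27 * #Q ^ 2 * 2 ^ Fintype.card ι from
    this univ Q fun p hp => ⟨hQ p hp, mem_univ _⟩
  intro V
  induction V using Finset.induction_on_max with
  | empty =>
    intro Q hQ
    simp [eq_empty_of_forall_notMem fun p hp => notMem_empty _ (hQ p hp).2]
  | insert a V hVa ih =>
    intro Q hQ
    set Q₀ := Q.filter fun p => p.2 ≠ a
    set R := Q.filter fun p => p.2 = a
    set T := R.image Prod.fst
    have hQ₀ : ∀ p ∈ Q₀, p.1 < p.2 ∧ p.2 ∈ V := by
      intro p hp
      obtain ⟨hpQ, hpa⟩ := mem_filter.1 hp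
      exact ⟨(hQ p hpQ).1, (mem_insert.1 (hQ p hpQ).2).resolve_left hpa⟩
    have hR : ∀ p ∈ R, p.1 < a ∧ p.2 = a := by
      intro p hp
      obtain ⟨hpQ, hpa⟩ := mem_filter.1 hp
      exact ⟨hpa ▸ (hQ p hpQ).1, hpa⟩
    have hRinj : Set.InjOn Prod.fst R := fun p hp q hq h =>
      Prod.ext h (((hR p hp).2).trans (hR q hq).2.symm)
    have hcard : #Q = #Q₀ + #T := by
      rw [card_image_of_injOn hRinj, add_comm]
      exact (card_filter_add_card_filter_not _).symm
    have hdec : ∀ s, ∑ p ∈ Q, rademacher s p.1 * rademacher s p.2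
        = ∑ p ∈ Q₀, rademacher s p.1 * rademacher s p.2
          + rademacher s a * ∑ i ∈ T, rademacher s i := by
      intro s
      rw [sum_image hRinj, mul_sum, ← sum_filter_not_add_sum_filter Q fun p => p.2 = a]
      congr 1
      exact sum_congr rfl fun p hp => by rw [(hR p hp).2, mul_comm]
    have hX : DependsOn (fun s => ∑ p ∈ Q₀, rademacher s p.1 * rademacher s p.2)
        (Set.Iio a) := fun s t h => sum_congr rfl fun p hp => by
      have hp2 : p.2 < a := hVa _ (hQ₀ p hp).2
      rw [rademacher_congr (h _ ((hQ₀ p hp).1.trans hp2)), rademacher_congr (h _ hp2)]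
    have hT : ↑T ⊆ Set.Iio a := fun i hi => by
      obtain ⟨p, hp, rfl⟩ := mem_image.1 hi
      exact (hR p hp).1
    simp only [hdec]
    rw [hcard]
    push_cast
    exact sum_add_rademacher_mul_sum_pow_four_le Set.self_notMem_Iio hT hX (ih Q₀ hQ₀)

lemma abs_sum_range_mul_le_of_antitoneOn {a w : ℕ → ℝ} {n : ℕ} {B : ℝ}
    (hw : AntitoneOn w (Set.Iio n)) (hw0 : ∀ i, 0 ≤ w i)
    (hB : ∀ k ≤ n, |∑ i ∈ range k, a i| ≤ B) :
    |∑ i ∈ range n, a i * w i| ≤ w 0 * B := by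
  rcases Nat.eq_zero_or_pos n with rfl | hn
  · simpa using mul_nonneg (hw0 0) ((abs_nonneg _).trans (hB 0 le_rfl))
  have hdrop : ∀ i ∈ range (n - 1), 0 ≤ w i - w (i + 1) := fun i hi => by
    have := mem_range.1 hi
    exact sub_nonneg.2 (hw (by simp; omega) (by simp; omega) (by omega))
  have hparts := sum_range_by_parts w a n
  simp only [smul_eq_mul] at hparts
  calc |∑ i ∈ range n, a i * w i|
      = |w (n - 1) * ∑ i ∈ range n, a i
          + ∑ i ∈ range (n - 1), (w i - w (i + 1)) * ∑ j ∈ range (i + 1), a j| := by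
        rw [← sum_congr rfl fun i _ => mul_comm (w i) (a i), hparts, sub_eq_add_neg,
          ← sum_neg_distrib]
        congr 3 with i
        ring
    _ ≤ w (n - 1) * B + ∑ i ∈ range (n - 1), (w i - w (i + 1)) * B := by
        refine (abs_add_le _ _).trans (add_le_add ?_ ((abs_sum_le_sum_abs _ _).trans ?_))
        · rw [abs_mul, abs_of_nonneg (hw0 _)]
          exact mul_le_mul_of_nonneg_left (hB n le_rfl) (hw0 _)
        · refine sum_le_sum fun i hi => ?_
          rw [abs_mul, abs_of_nonneg (hdrop i hi)]
          exact mul_le_mul_of_nonneg_left (hB _ (by have := mem_range.1 hi; omega)) (hdrop i hi)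
    _ = w 0 * B := by
        rw [← sum_mul, sum_range_sub' w, ← add_mul]
        ring

lemma exists_enumeration_monotoneOn {α : Type*} [Nonempty α] (P : Finset α) (c : α → ℝ) :
    ∃ π : ℕ → α, Set.BijOn π (range #P) P ∧ MonotoneOn (c ∘ π) (range #P) := by
  classical
  let e : Fin #P ≃ P := P.equivFin.symm
  let τ := Tuple.sort fun i => c (e i)
  let π : ℕ → α := fun i => if h : i < #P then e (τ ⟨i, h⟩) else Classical.arbitrary α
  have hπ : ∀ i (h : i < #P), π i = e (τ ⟨i, h⟩) := fun i h => dif_pos h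
  refine ⟨π, ⟨fun i hi => ?_, fun i hi j hj hij => ?_, fun p hp => ?_⟩, fun i hi j hj hij => ?_⟩
  · rw [hπ i (mem_range.1 hi)]; exact (e _).2
  · rw [hπ i (mem_range.1 hi), hπ j (mem_range.1 hj)] at hij
    simpa using τ.injective (e.injective (Subtype.ext hij))
  · obtain ⟨k, hk⟩ := τ.surjective (e.symm ⟨p, hp⟩)
    refine ⟨k, by simp, ?_⟩
    rw [hπ k k.2]
    simp [hk]
  · simp only [Function.comp, hπ i (mem_range.1 hi), hπ j (mem_range.1 hj)]
    exact Tuple.monotone_sort (fun i => c (e i)) (Fin.mk_le_mk.2 hij)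

lemma abs_sum_mul_exp_neg_le {α : Type*} {P : Finset α} {c f : α → ℝ} {π : ℕ → α}
    (hπ : Set.BijOn π (range #P) P) (hmono : MonotoneOn (c ∘ π) (range #P))
    (hc : ∀ p, 0 ≤ c p) {σ B : ℝ} (hσ : 0 ≤ σ)
    (hB : ∀ k ≤ #P, |∑ i ∈ range k, f (π i)| ≤ B) :
    |∑ p ∈ P, f p * Real.exp (-σ * c p)| ≤ B := by
  have hB0 : 0 ≤ B := (abs_nonneg _).trans (hB 0 (Nat.zero_le _))
  rw [← sum_nbij π hπ.mapsTo hπ.injOn hπ.surjOn fun _ _ => rfl]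
  refine (abs_sum_range_mul_le_of_antitoneOn (w := fun i => Real.exp (-σ * c (π i)))
    (fun i hi j hj hij => ?_) (fun i => (Real.exp_pos _).le) hB).trans ?_
  · simp only [Real.exp_le_exp, neg_mul, neg_le_neg_iff]
    exact mul_le_mul_of_nonneg_left (hmono (by simpa using hi) (by simpa using hj) hij) hσ
  · exact mul_le_of_le_one_left hB0 (Real.exp_le_one_iff.2 (by nlinarith [hc (π 0)]))

noncomputable def maxDyadicIncrement (S : ℕ → ℝ) (L w : ℕ) : ℝ :=
  (range (2 ^ (L - w))).sup' (nonempty_range_iff.2 (pow_ne_zero _ two_ne_zero))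
    fun m => |S (2 ^ w * (2 * m + 1)) - S (2 ^ w * (2 * m))|

section MaxDyadicIncrement

variable {S : ℕ → ℝ} {L w : ℕ}

lemma abs_sub_le_maxDyadicIncrement {m : ℕ} (hm : m < 2 ^ (L - w)) :
    |S (2 ^ w * (2 * m + 1)) - S (2 ^ w * (2 * m))| ≤ maxDyadicIncrement S L w :=
  le_sup' (fun m => |S (2 ^ w * (2 * m + 1)) - S (2 ^ w * (2 * m))|) (mem_range.2 hm)

lemma maxDyadicIncrement_nonneg : 0 ≤ maxDyadicIncrement S L w :=
  (abs_nonneg _).trans (abs_sub_le_maxDyadicIncrement (m := 0) (by positivity))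

lemma maxDyadicIncrement_pow_four_le :
    maxDyadicIncrement S L w ^ 4
      ≤ ∑ m ∈ range (2 ^ (L - w)), (S (2 ^ w * (2 * m + 1)) - S (2 ^ w * (2 * m))) ^ 4 := by
  obtain ⟨m, hm, hmax⟩ :=
    exists_mem_eq_sup' (nonempty_range_iff.2 (pow_ne_zero (L - w) two_ne_zero))
    fun m => |S (2 ^ w * (2 * m + 1)) - S (2 ^ w * (2 * m))|
  rw [maxDyadicIncrement, hmax, pow_abs, abs_of_nonneg (by positivity)]
  exact single_le_sum (f := fun m => (S (2 ^ w * (2 * m + 1)) - S (2 ^ w * (2 * m))) ^ 4)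
    (fun _ _ => by positivity) hm

/-- Chaining: `S k - S 0` telescopes along the truncations `2 ^ w * (k / 2 ^ w)` of `k`, and
consecutive truncations are either equal or the two ends of a dyadic block. -/
lemma abs_sub_le_sum_maxDyadicIncrement {k : ℕ} (hk : k < 2 ^ L) :
    |S k - S 0| ≤ ∑ w ∈ range L, maxDyadicIncrement S L w := by
  let t : ℕ → ℕ := fun w => 2 ^ w * (k / 2 ^ w)
  have hstep : ∀ w < L, |S (t w) - S (t (w + 1))| ≤ maxDyadicIncrement S L w := by
    intro w hw
    set m := k / 2 ^ (w + 1)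
    have hm : m < 2 ^ (L - w) := by
      refine (Nat.div_le_div_left (Nat.pow_le_pow_right two_pos w.le_succ) (by positivity)).trans_lt
        (Nat.div_lt_of_lt_mul ?_)
      rwa [← pow_add, Nat.add_sub_cancel' hw.le]
    have hdiv : k / 2 ^ w = 2 * m + k / 2 ^ w % 2 := by
      rw [show m = k / 2 ^ w / 2 by rw [Nat.div_div_eq_div_mul, ← pow_succ], Nat.div_add_mod]
    have hnext : t (w + 1) = 2 ^ w * (2 * m) := by
      simp only [t, m, pow_succ]; ring
    rcases Nat.mod_two_eq_zero_or_one (k / 2 ^ w) with h | h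
    · have : t w = t (w + 1) := by rw [hnext]; simp only [t]; rw [hdiv, h, add_zero]
      simpa [this] using maxDyadicIncrement_nonneg
    · have : t w = 2 ^ w * (2 * m + 1) := by simp only [t]; rw [hdiv, h]
      rw [this, hnext]
      exact abs_sub_le_maxDyadicIncrement hm
  have ht0 : t 0 = k := by simp [t]
  have htL : t L = 0 := by simp [t, Nat.div_eq_of_lt hk]
  calc |S k - S 0| = |∑ w ∈ range L, (S (t w) - S (t (w + 1)))| := by
        rw [sum_range_sub' (fun w => S (t w)), ht0, htL]
    _ ≤ ∑ w ∈ range L, |S (t w) - S (t (w + 1))| := abs_sum_le_sum_abs _ _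
    _ ≤ ∑ w ∈ range L, maxDyadicIncrement S L w :=
        sum_le_sum fun w hw => hstep w (mem_range.1 hw)

end MaxDyadicIncrement

lemma sum_maxDyadicIncrement_pow_four_le {Ω : Type*} [Fintype Ω] (S : Ω → ℕ → ℝ) {L w : ℕ}
    {B : ℝ} (hB : ∀ m, ∑ ω, (S ω (2 ^ w * (2 * m + 1)) - S ω (2 ^ w * (2 * m))) ^ 4 ≤ B) :
    (∑ ω, maxDyadicIncrement (S ω) L w) ^ 4 ≤ Fintype.card Ω ^ 3 * (2 ^ (L - w) * B) := by
  calc (∑ ω, maxDyadicIncrement (S ω) L w) ^ 4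
      ≤ Fintype.card Ω ^ 3 * ∑ ω, maxDyadicIncrement (S ω) L w ^ 4 := by
        simpa using pow_sum_le_card_mul_sum_pow (s := univ)
          (fun ω _ => maxDyadicIncrement_nonneg (S := S ω)) 3
    _ ≤ Fintype.card Ω ^ 3 * (2 ^ (L - w) * B) := by
        gcongr
        calc ∑ ω, maxDyadicIncrement (S ω) L w ^ 4
            ≤ ∑ ω, ∑ m ∈ range (2 ^ (L - w)),
                (S ω (2 ^ w * (2 * m + 1)) - S ω (2 ^ w * (2 * m))) ^ 4 :=
              sum_le_sum fun ω _ => maxDyadicIncrement_pow_four_le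
          _ ≤ 2 ^ (L - w) * B := by
              rw [sum_comm]
              simpa using sum_le_sum fun m (_ : m ∈ range (2 ^ (L - w))) => hB m

lemma sum_range_pow_sub_le {r : ℝ} (hr0 : 0 ≤ r) (hr1 : r < 1) (L : ℕ) :
    ∑ w ∈ range L, r ^ (L - w) ≤ r / (1 - r) := by
  have h1r : 0 < 1 - r := sub_pos.2 hr1
  induction L with
  | zero => simpa using div_nonneg hr0 h1r.le
  | succ L ih =>
    have hshift : ∑ w ∈ range L, r ^ (L + 1 - w) = r * ∑ w ∈ range L, r ^ (L - w) := by
      rw [mul_sum]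
      exact sum_congr rfl fun w hw => by
        rw [Nat.sub_add_comm (mem_range.1 hw).le, pow_succ, mul_comm]
    rw [sum_range_succ, hshift, Nat.add_sub_cancel_left, pow_one]
    calc r * ∑ w ∈ range L, r ^ (L - w) + r ≤ r * (r / (1 - r)) + r := by gcongr
      _ = r / (1 - r) := by field_simp; ring

def chaosPartialSum {ι : Type*} (π : ℕ → ι × ι) (M : ℕ) (s : ι → Bool) (k : ℕ) : ℝ :=
  ∑ i ∈ range k, if i < M then rademacher s (π i).1 * rademacher s (π i).2 else 0

lemma abs_sum_chaos_mul_exp_neg_le {ι : Type*} {P : Finset (ι × ι)} {c : ι × ι → ℝ}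
    (hc : ∀ p, 0 ≤ c p) {π : ℕ → ι × ι} (hπ : Set.BijOn π (range #P) P)
    (hmono : MonotoneOn (c ∘ π) (range #P)) {L : ℕ} (hPL : #P < 2 ^ L) (s : ι → Bool)
    {σ : ℝ} (hσ : 0 ≤ σ) :
    |∑ p ∈ P, rademacher s p.1 * rademacher s p.2 * Real.exp (-σ * c p)|
      ≤ ∑ w ∈ range L, maxDyadicIncrement (chaosPartialSum π #P s) L w := by
  refine abs_sum_mul_exp_neg_le (f := fun p => rademacher s p.1 * rademacher s p.2)
    hπ hmono hc hσ fun k hk => ?_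
  have := abs_sub_le_sum_maxDyadicIncrement (S := chaosPartialSum π #P s) (hk.trans_lt hPL)
  rwa [chaosPartialSum, chaosPartialSum, sum_range_zero, sub_zero,
    sum_congr rfl fun i hi => if_pos ((mem_range.1 hi).trans_le hk)] at this

section GaussianChaos

variable {ι : Type*} [Fintype ι] [LinearOrder ι] {π : ℕ → ι × ι} {M : ℕ}

lemma sum_chaosPartialSum_sub_pow_four_le (hπ : Set.InjOn π (range M))
    (hlt : ∀ i < M, (π i).1 < (π i).2) {a b : ℕ} (hab : a ≤ b) :
    ∑ s, (chaosPartialSum π M s b - chaosPartialSum π M s a) ^ 4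
      ≤ 27 * (b - a : ℕ) ^ 2 * 2 ^ Fintype.card ι := by
  set I := (Ico a b).filter (· < M)
  have hI : Set.InjOn π I := hπ.mono fun i hi => by simpa using (mem_filter.1 hi).2
  have hincr : ∀ s, chaosPartialSum π M s b - chaosPartialSum π M s a
      = ∑ p ∈ I.image π, rademacher s p.1 * rademacher s p.2 := fun s => by
    rw [sum_image hI, sum_filter, chaosPartialSum, chaosPartialSum, sum_Ico_eq_sub _ hab]
  have hcard : #(I.image π) ≤ b - a :=
    card_image_le.trans ((card_filter_le _ _).trans (Nat.card_Ico a b).le)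
  simp only [hincr]
  refine (sum_chaos_pow_four_le _ fun p hp => ?_).trans ?_
  · obtain ⟨i, hi, rfl⟩ := mem_image.1 hp
    exact hlt i (mem_filter.1 hi).2
  · gcongr

lemma sum_maxDyadicIncrement_chaosPartialSum_le (hπ : Set.InjOn π (range M))
    (hlt : ∀ i < M, (π i).1 < (π i).2) {L w : ℕ} (hL : 2 ^ L ≤ 2 * Fintype.card ι ^ 2)
    (hw : w ≤ L) :
    ∑ s, maxDyadicIncrement (chaosPartialSum π M s) L w
      ≤ 4 * Fintype.card ι * (6 / 7) ^ (L - w) * 2 ^ Fintype.card ι := by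
  set n := Fintype.card ι
  have hmom : ∀ m, ∑ s, (chaosPartialSum π M s (2 ^ w * (2 * m + 1))
      - chaosPartialSum π M s (2 ^ w * (2 * m))) ^ 4 ≤ 27 * (2 ^ w) ^ 2 * 2 ^ n := fun m => by
    have hlen : 2 ^ w * (2 * m + 1) - 2 ^ w * (2 * m) = 2 ^ w := by
      rw [mul_add, mul_one, Nat.add_sub_cancel_left]
    have := sum_chaosPartialSum_sub_pow_four_le hπ hlt
      (Nat.mul_le_mul_left (2 ^ w) (Nat.le_succ (2 * m)))
    rwa [hlen, Nat.cast_pow, Nat.cast_ofNat] at this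
  have h4 := sum_maxDyadicIncrement_pow_four_le (L := L) (chaosPartialSum π M) hmom
  -- with `i = L - w`: `2 ^ i * 4 ^ w = 4 ^ L / 2 ^ i ≤ 4 n ^ 4 / 2 ^ i`, and `2 (6/7) ^ 4 ≥ 1`
  have hnum : 27 * (2 : ℝ) ^ (L - w) * (2 ^ w) ^ 2 ≤ (4 * n * (6 / 7) ^ (L - w)) ^ 4 := by
    obtain ⟨i, rfl⟩ := Nat.exists_eq_add_of_le hw
    rw [Nat.add_sub_cancel_left]
    have hL' : (2 : ℝ) ^ w * 2 ^ i ≤ 2 * n ^ 2 := by rw [← pow_add]; exact_mod_cast hL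
    have hr : (1 : ℝ) ≤ (2 * (6 / 7) ^ 4) ^ i := one_le_pow₀ (by norm_num)
    refine le_of_mul_le_mul_right ?_ (pow_pos (two_pos (α := ℝ)) i)
    calc 27 * (2 : ℝ) ^ i * (2 ^ w) ^ 2 * 2 ^ i = 27 * (2 ^ w * 2 ^ i) ^ 2 := by ring
      _ ≤ 256 * (n : ℝ) ^ 4 * 1 := by
          nlinarith [mul_pos (pow_pos (two_pos (α := ℝ)) w) (pow_pos (two_pos (α := ℝ)) i)]
      _ ≤ 256 * (n : ℝ) ^ 4 * (2 * (6 / 7 : ℝ) ^ 4) ^ i := by gcongr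
      _ = (4 * n * (6 / 7 : ℝ) ^ i) ^ 4 * 2 ^ i := by rw [mul_pow, ← pow_mul]; ring
  refine le_of_pow_le_pow_left₀ four_ne_zero (by positivity) (h4.trans ?_)
  calc _ = ((2 : ℝ) ^ n) ^ 4 * (27 * 2 ^ (L - w) * (2 ^ w) ^ 2) := by
        simp only [Fintype.card_fun, Fintype.card_bool, Nat.cast_pow, Nat.cast_ofNat]; ring
    _ ≤ ((2 : ℝ) ^ n) ^ 4 * (4 * n * (6 / 7) ^ (L - w)) ^ 4 := by gcongr
    _ = _ := by ring

theorem sum_iSup_abs_gaussianChaos_le [Nonempty ι] (c : ι × ι → ℝ) (hc : ∀ p, 0 ≤ c p) :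
    ∑ s : ι → Bool, ⨆ σ : Set.Ioi (0 : ℝ), |(1 / Fintype.card ι : ℝ) *
        ∑ p ∈ univ.filter (fun p : ι × ι => p.1 < p.2),
          rademacher s p.1 * rademacher s p.2 * Real.exp (-(σ : ℝ) * c p)|
      ≤ 24 * 2 ^ Fintype.card ι := by
  set n := Fintype.card ι
  set P := univ.filter fun p : ι × ι => p.1 < p.2
  obtain ⟨π, hbij, hmono⟩ := exists_enumeration_monotoneOn P c
  set L := Nat.log 2 (n ^ 2) + 1
  have hn : 0 < n := Fintype.card_pos
  have hPL : #P < 2 ^ L := (card_filter_le _ _).trans_lt <| by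
    rw [card_univ, Fintype.card_prod, ← sq]
    exact Nat.lt_pow_succ_log_self one_lt_two _
  have hL : 2 ^ L ≤ 2 * n ^ 2 := by
    rw [pow_succ, mul_comm]
    exact Nat.mul_le_mul_left 2 (Nat.pow_log_le_self 2 (by positivity))
  have hlt : ∀ i < #P, (π i).1 < (π i).2 := fun i hi =>
    (mem_filter.1 (hbij.mapsTo (by simpa using hi))).2
  calc _ ≤ ∑ s : ι → Bool,
        1 / n * ∑ w ∈ range L, maxDyadicIncrement (chaosPartialSum π #P s) L w :=
        sum_le_sum fun s _ => ciSup_le fun σ => by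
          rw [abs_mul, abs_of_nonneg (by positivity)]
          gcongr
          exact abs_sum_chaos_mul_exp_neg_le hc hbij hmono hPL s σ.2.le
    _ = 1 / n * ∑ w ∈ range L, ∑ s, maxDyadicIncrement (chaosPartialSum π #P s) L w := by
        rw [← mul_sum, sum_comm]
    _ ≤ 1 / n * ∑ w ∈ range L, 4 * (n : ℝ) * (6 / 7) ^ (L - w) * 2 ^ n := by
        refine mul_le_mul_of_nonneg_left (sum_le_sum fun w hw => ?_) (by positivity)
        exact sum_maxDyadicIncrement_chaosPartialSum_le hbij.injOn hlt hL (mem_range.1 hw).le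
    _ = 4 * 2 ^ n * ∑ w ∈ range L, (6 / 7 : ℝ) ^ (L - w) := by
        rw [mul_sum, mul_sum]
        refine sum_congr rfl fun w _ => ?_
        field_simp
    _ ≤ 4 * 2 ^ n * 6 := by
        gcongr
        exact (sum_range_pow_sub_le (by norm_num) (by norm_num) L).trans_eq (by norm_num)
    _ = 24 * 2 ^ n := by ring

end GaussianChaos

theorem rademacher_chaos_gaussian_bound_general
    (d N : ℕ) (hN : 0 < N)
    (x : Fin N → EuclideanSpace ℝ (Fin d)) (κ : ℝ) (hκ : 1 ≤ κ) :
    (∑ s : Fin N → Bool,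
        ⨆ σ : Set.Ioi (0 : ℝ),
          |(1 / N : ℝ) *
            ∑ p ∈ Finset.univ.filter (fun p : Fin N × Fin N => p.1 < p.2),
              (if s p.1 then (1 : ℝ) else -1) * (if s p.2 then (1 : ℝ) else -1) *
                Real.exp (-(σ : ℝ) * ‖x p.1 - x p.2‖ ^ 2)|) / 2 ^ N ≤
      (1 + 192 * Real.exp 1) * κ ^ 2 := by
  have : Nonempty (Fin N) := ⟨⟨0, hN⟩⟩
  have hchaos := sum_iSup_abs_gaussianChaos_le (fun p : Fin N × Fin N => ‖x p.1 - x p.2‖ ^ 2)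
    fun p => sq_nonneg _
  rw [Fintype.card_fin] at hchaos
  have he : 2 ≤ Real.exp 1 := by linarith [Real.add_one_le_exp (1 : ℝ)]
  have hκ2 : 1 ≤ κ ^ 2 := one_le_pow₀ hκ
  calc _ ≤ (24 : ℝ) := (div_le_iff₀ (by positivity)).2 hchaos
    _ ≤ (1 + 192 * Real.exp 1) * 1 := by linarith
    _ ≤ (1 + 192 * Real.exp 1) * κ ^ 2 := by gcongr

/-- The expected order-two Rademacher chaos of the Gaussian kernel
class is at most `(1 + 192e) κ²`: with `ε` uniform on `{−1,1}^N` (encoded by averaging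
over sign patterns `s : Fin N → Bool`),
`E_ε[ sup_{σ>0} |(1/N) Σ_{i<j} ε_i ε_j exp(−σ‖x_i − x_j‖²)| ] ≤ (1 + 192e) κ²`
for every `κ ≥ 1`. -/
theorem rademacher_chaos_gaussian_bound
    (d N : ℕ) (hd : 0 < d) (hN : 0 < N)
    (x : Fin N → EuclideanSpace ℝ (Fin d)) (κ : ℝ) (hκ : 1 ≤ κ) :
    (∑ s : Fin N → Bool,
        ⨆ σ : Set.Ioi (0 : ℝ),
          |(1 / N : ℝ) *
            ∑ p ∈ Finset.univ.filter (fun p : Fin N × Fin N => p.1 < p.2),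
              (if s p.1 then (1 : ℝ) else -1) * (if s p.2 then (1 : ℝ) else -1) *
                Real.exp (-(σ : ℝ) * ‖x p.1 - x p.2‖ ^ 2)|) / 2 ^ N ≤
      (1 + 192 * Real.exp 1) * κ ^ 2 :=
  rademacher_chaos_gaussian_bound_general d N hN x κ hκ
end
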